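/- For n ≥ 0, c ≥ 1 and positive integers a_1, ..., a_n, the sum over i from 0 to n of f_c(S(x_{a_{i+1}} ⋯ x_{a_n}), x_{a_1} ⋯ x_{a_i}) equals x_{c + a_1 + ⋯ + a_n} if n is even, and 0 if n is odd. -/

import Mathlib

noncomputable section
namespace BlockShuffle

/-- The underlying vector space of `𝔛 = ℚ⟨x₁, x₂, …⟩`, with words as basis. -/
abbrev XX : Type := List ℕ →₀ ℚ

/-- The basis word `x_{a₁} ⋯ x_{a_d}`. -/
def wX (w : List ℕ) : XX := Finsupp.single w 1

/-- Left multiplication by the generator `x_a`. -/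
def consX (a : ℕ) : XX →ₗ[ℚ] XX := Finsupp.lmapDomain ℚ ℚ (List.cons a)

/-- Left multiplication by the word `x_{a₁} ⋯ x_{a_d}`. -/
def consListX (w : List ℕ) : XX →ₗ[ℚ] XX := Finsupp.lmapDomain ℚ ℚ (w ++ ·)

/-- The shift operator `s_k` with `s_k(x_i w) = x_{i+k} w`, `s_k(1) = 0`. -/
def shiftX (k : ℕ) : XX →ₗ[ℚ] XX :=
  Finsupp.lsum ℚ fun w => LinearMap.toSpanSingleton ℚ XX
    (match w with
     | [] => 0
     | i :: t => Finsupp.single ((i + k) :: t) (1 : ℚ))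

/-- The block shuffle product `⋄` on basis words. -/
def dshW : List ℕ → List ℕ → XX
  | [], v => wX v
  | u, [] => wX u
  | a :: u, b :: v =>
      consX a (dshW u (b :: v)) + consX b (dshW (a :: u) v) - shiftX (a + b) (dshW u v)
  termination_by u v => u.length + v.length

/-- The block shuffle product `⋄ : 𝔛 × 𝔛 → 𝔛`, as a bilinear map. -/
def dshL : XX →ₗ[ℚ] XX →ₗ[ℚ] XX :=
  Finsupp.lsum ℚ fun u => LinearMap.toSpanSingleton ℚ (XX →ₗ[ℚ] XX)
    (Finsupp.lsum ℚ fun v => LinearMap.toSpanSingleton ℚ XX (dshW u v))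

/-- The maps `f_c` on basis words. -/
def fW : ℕ → List ℕ → List ℕ → XX
  | c, [], v => wX (c :: v)
  | c, u, [] => wX (c :: u)
  | c, a :: u, b :: v =>
      consX c (fW a u (b :: v)) + consX c (fW b (a :: u) v) - fW (c + a + b) u v
  termination_by _ u v => u.length + v.length

/-- The bilinear maps `f_c : 𝔛 × 𝔛 → 𝔛`. -/
def fL (c : ℕ) : XX →ₗ[ℚ] XX →ₗ[ℚ] XX :=
  Finsupp.lsum ℚ fun u => LinearMap.toSpanSingleton ℚ (XX →ₗ[ℚ] XX)
    (Finsupp.lsum ℚ fun v => LinearMap.toSpanSingleton ℚ XX (fW c u v))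

/-- The anti-automorphism `S` of `𝔛` with `S(x_k) = -x_k`. -/
def SX : XX →ₗ[ℚ] XX :=
  Finsupp.lsum ℚ fun w => LinearMap.toSpanSingleton ℚ XX (((-1 : ℚ) ^ w.length) • wX w.reverse)

/-- The subspace `𝔛⁺ ⋄ 𝔛⁺` spanned by block shuffle products of nonconstant elements. -/
def diamondSpan : Submodule ℚ XX :=
  Submodule.span ℚ
    {x | ∃ u v : List ℕ, u ≠ [] ∧ v ≠ [] ∧ (∀ i ∈ u, 1 ≤ i) ∧ (∀ i ∈ v, 1 ≤ i) ∧ x = dshW u v}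



lemma consX_wX (c : ℕ) (w : List ℕ) : consX c (wX w) = wX (c :: w) := by
  simp [consX, wX]

lemma fW_nil_left (c : ℕ) (v : List ℕ) : fW c [] v = wX (c :: v) := by
  cases v <;> simp [fW]

lemma fW_nil_right (c : ℕ) (u : List ℕ) : fW c u [] = wX (c :: u) := by
  cases u <;> simp [fW]

lemma fW_cons (c a b : ℕ) (u v : List ℕ) :
    fW c (a :: u) (b :: v) =
      consX c (fW a u (b :: v)) + consX c (fW b (a :: u) v) - fW (c + a + b) u v := by
  rw [fW]

lemma fL_wX (c : ℕ) (u v : List ℕ) : fL c (wX u) (wX v) = fW c u v := by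
  simp [fL, wX]

lemma SX_wX (w : List ℕ) : SX (wX w) = ((-1 : ℚ) ^ w.length) • wX w.reverse := by
  simp [SX, wX]

def H (c : ℕ) (w : List ℕ) : XX :=
  ∑ i ∈ Finset.range (w.length + 1),
    ((-1 : ℚ) ^ (w.length - i)) • fW c ((w.drop i).reverse) (w.take i)

lemma H_nil (c : ℕ) : H c [] = wX [c] := by
  simp [H, fW_nil_left]

lemma H_single (c a : ℕ) : H c [a] = 0 := by
  simp [H, Finset.sum_range_succ, fW_nil_left, fW_nil_right]

lemma H_step (c a b : ℕ) (m : List ℕ) :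
    H c (a :: (m ++ [b])) =
      -(consX c (H b (a :: m))) + consX c (H a (m ++ [b])) + H (c + b + a) m := by
  set n := m.length with hn
  set A : ℕ → XX := fun j => fW b ((m.drop j).reverse) (a :: m.take j) with hA
  set B : ℕ → XX := fun j => fW a (b :: (m.drop j).reverse) (m.take j) with hB
  set C : ℕ → XX := fun j => fW (c + b + a) ((m.drop j).reverse) (m.take j) with hC
  have eR1 : H b (a :: m) =
      (∑ j ∈ Finset.range (n + 1), ((-1 : ℚ) ^ (n - j)) • A j)
        + ((-1 : ℚ) ^ (n + 1)) • wX (b :: (m.reverse ++ [a])) := by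
    unfold H
    rw [List.length_cons, Finset.sum_range_succ']
    simp [Nat.succ_sub_succ, fW_nil_right, List.reverse_cons, hA, hn]
  have eR1' : -(consX c (H b (a :: m))) =
      (∑ j ∈ Finset.range (n + 1), -((-1 : ℚ) ^ (n - j)) • consX c (A j))
        + ((-1 : ℚ) ^ n) • wX (c :: b :: (m.reverse ++ [a])) := by
    rw [eR1, map_add, map_sum, neg_add]
    congr 1
    · rw [← Finset.sum_neg_distrib]
      exact Finset.sum_congr rfl fun j _ => by rw [map_smul, neg_smul]
    · rw [map_smul, consX_wX, pow_succ, mul_neg_one, neg_smul, neg_neg]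
  have eR2 : consX c (H a (m ++ [b])) =
      (∑ j ∈ Finset.range (n + 1), -((-1 : ℚ) ^ (n - j)) • consX c (B j))
        + wX (c :: a :: (m ++ [b])) := by
    unfold H
    rw [show (m ++ [b]).length = n + 1 by simp [hn], Finset.sum_range_succ, map_add, map_sum]
    congr 1
    · refine Finset.sum_congr rfl fun j hj => ?_
      rw [Finset.mem_range] at hj
      have hj' : j ≤ n := Nat.lt_succ_iff.mp hj
      rw [List.drop_append_of_le_length hj', List.take_append_of_le_length hj',
        List.reverse_append, Nat.succ_sub hj', pow_succ, mul_neg_one, map_smul]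
      simp [hB]
    · rw [List.drop_of_length_le (by simp [hn]), List.take_of_length_le (by simp [hn])]
      simp [fW_nil_left, consX_wX]
  have eR3 : H (c + b + a) m = ∑ j ∈ Finset.range (n + 1), ((-1 : ℚ) ^ (n - j)) • C j := rfl
  have eL : H c (a :: (m ++ [b])) =
      (∑ j ∈ Finset.range (n + 1),
        -((-1 : ℚ) ^ (n - j)) • (consX c (A j) + consX c (B j) - C j))
        + ((-1 : ℚ) ^ n) • wX (c :: b :: (m.reverse ++ [a])) + wX (c :: a :: (m ++ [b])) := by
    unfold H
    rw [show (a :: (m ++ [b])).length = n + 2 by simp [hn], Finset.sum_range_succ,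
      Finset.sum_range_succ']
    congr 1
    · congr 1
      · refine Finset.sum_congr rfl fun j hj => ?_
        rw [Finset.mem_range] at hj
        have hj' : j ≤ n := Nat.lt_succ_iff.mp hj
        rw [List.drop_succ_cons, List.take_succ_cons,
          List.drop_append_of_le_length hj', List.take_append_of_le_length hj',
          List.reverse_append, List.reverse_singleton, List.singleton_append,
          Nat.succ_sub_succ, Nat.succ_sub hj', pow_succ, mul_neg_one, fW_cons]
      · -- i = 0 term
        rw [show n + 2 - 0 = n + 2 by omega, List.drop_zero, List.take_zero,
          List.reverse_cons, List.reverse_append, fW_nil_right]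
        rw [show ((-1:ℚ))^(n+2) = (-1)^n by ring]
        simp
    · rw [show n + 2 - (n + 2) = 0 by omega, List.drop_of_length_le (by simp [hn]),
        List.take_of_length_le (by simp [hn])]
      simp [fW_nil_left]
  rw [eL, eR1', eR2, eR3]
  rw [Finset.sum_congr rfl (fun j _ =>
    (by module :
      -((-1 : ℚ) ^ (n - j)) • (consX c (A j) + consX c (B j) - C j)
        = (-((-1 : ℚ) ^ (n - j)) • consX c (A j) + -((-1 : ℚ) ^ (n - j)) • consX c (B j))
          + ((-1 : ℚ) ^ (n - j)) • C j)),
    Finset.sum_add_distrib, Finset.sum_add_distrib]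
  abel

lemma H_val_aux : ∀ (N : ℕ) (w : List ℕ), w.length ≤ N → ∀ c : ℕ,
    H c w = if Even w.length then wX [c + w.sum] else 0 := by
  intro N
  induction N using Nat.strong_induction_on with
  | _ N ih =>
    intro w hw c
    rcases w with _ | ⟨a, t⟩
    · simp [H_nil]
    · rcases t.eq_nil_or_concat with rfl | ⟨m, b, rfl⟩
      · simp [H_single]
      · simp only [List.concat_eq_append] at hw ⊢
        have hlen : (a :: (m ++ [b])).length = m.length + 2 := by simp
        have h1 : m.length + 1 < N := by rw [hlen] at hw; omega
        have h2 : m.length < N := by omega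
        rw [H_step, ih _ h1 (a :: m) (by simp) b, ih _ h1 (m ++ [b]) (by simp) a,
          ih _ h2 m le_rfl (c + b + a), hlen]
        by_cases h : Even m.length
        · have e1 : c + b + a + m.sum = c + (a :: (m ++ [b])).sum := by simp; omega
          simp [parity_simps, h, e1]
        · have e2 : b + (a + m.sum) = a + (m.sum + b) := by omega
          simp [parity_simps, h, e2, consX_wX]

lemma H_val (w : List ℕ) (c : ℕ) :
    H c w = if Even w.length then wX [c + w.sum] else 0 :=
  H_val_aux w.length w le_rfl c

/-- Lemma `flem_for_cyclic`. -/
theorem f_cyclic_sum (n c : ℕ) (hc : 1 ≤ c) (a : Fin n → ℕ) (ha : ∀ i, 1 ≤ a i) :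
    (∑ i ∈ Finset.range (n + 1),
        fL c (SX (wX ((List.ofFn a).drop i))) (wX ((List.ofFn a).take i))) =
      if Even n then wX [c + ∑ i, a i] else 0 := by
  have key : (∑ i ∈ Finset.range (n + 1),
      fL c (SX (wX ((List.ofFn a).drop i))) (wX ((List.ofFn a).take i)))
      = H c (List.ofFn a) := by
    rw [H, List.length_ofFn]
    refine Finset.sum_congr rfl fun i _ => ?_
    rw [SX_wX, map_smul, LinearMap.smul_apply, fL_wX, List.length_drop, List.length_ofFn]
  rw [key, H_val, List.length_ofFn, List.sum_ofFn]
end BlockShuffle
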